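/- arXiv:1009.3622 — 2 statements merged into one kernel-verified Lean document; each statement's English description precedes it below -/
import Mathlib

section
/- If L̃ is a space of the affine arrangement A_X (i.e. a nonempty intersection of a subset of the hyperplanes χ^{-1}(k), χ ∈ X, k ∈ ℤ), then π(L̃) is a layer of the toric arrangement T_X: there exists a subset X' ⊆ X such that π(L̃) is a connected component of the intersection ⋂_{χ ∈ X'} H_χ. -/
noncomputable section

/-- `V n` is the real vector space `ℝⁿ`. -/
abbrev Vn (n : ℕ) := EuclideanSpace ℝ (Fin n)

/-- The lattice `Λ ⊆ V` spanned over `ℤ` by an `ℝ`-basis `b`. -/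
def LamZ (n : ℕ) (b : Module.Basis (Fin n) ℝ (Vn n)) : AddSubgroup (Vn n) :=
  (Submodule.span ℤ (Set.range (b : Fin n → Vn n))).toAddSubgroup

/-- The torus `T = V/Λ`. -/
abbrev Torus (n : ℕ) (b : Module.Basis (Fin n) ℝ (Vn n)) := Vn n ⧸ LamZ n b

/-- The quotient map `π : V → T`. -/
def pr (n : ℕ) (b : Module.Basis (Fin n) ℝ (Vn n)) : Vn n → Torus n b :=
  QuotientAddGroup.mk

/-- The complement `M` of the affine arrangement `A_X`. -/
def Mcomp (n : ℕ) (X : Finset (Vn n →ₗ[ℝ] ℝ)) : Set (Vn n) :=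
  {v | ∀ χ ∈ X, ∀ k : ℤ, χ v ≠ (k : ℝ)}

/-- A chamber of the affine arrangement: a connected component of `M`. -/
def IsAffChamber (n : ℕ) (X : Finset (Vn n →ₗ[ℝ] ℝ)) (C : Set (Vn n)) : Prop :=
  ∃ v ∈ Mcomp n X, C = connectedComponentIn (Mcomp n X) v

/-- A space of the affine arrangement: a nonempty intersection of a (possibly empty)
set of hyperplanes `χ⁻¹(k)`, `χ ∈ X`, `k ∈ ℤ`. -/
def IsAffSpace (n : ℕ) (X : Finset (Vn n →ₗ[ℝ] ℝ)) (L : Set (Vn n)) : Prop :=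
  L.Nonempty ∧ ∃ P : Set ((Vn n →ₗ[ℝ] ℝ) × ℤ), (∀ p ∈ P, p.1 ∈ X) ∧
    L = ⋂ p ∈ P, {v : Vn n | p.1 v = (p.2 : ℝ)}

/-- A facet of the affine arrangement: a nonempty intersection of a space with the
closure of a chamber. -/
def IsAffFacet (n : ℕ) (X : Finset (Vn n →ₗ[ℝ] ℝ)) (F : Set (Vn n)) : Prop :=
  F.Nonempty ∧ ∃ L C, IsAffSpace n X L ∧ IsAffChamber n X C ∧ F = L ∩ closure C

/-- The hypersurface `H_χ = π(χ⁻¹(ℤ))` of the toric arrangement. -/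
def torHyp (n : ℕ) (b : Module.Basis (Fin n) ℝ (Vn n)) (χ : Vn n →ₗ[ℝ] ℝ) :
    Set (Torus n b) :=
  pr n b '' {v | ∃ k : ℤ, χ v = (k : ℝ)}

/-- The complement `R = π(M)` of the toric arrangement. -/
def Rcomp (n : ℕ) (b : Module.Basis (Fin n) ℝ (Vn n)) (X : Finset (Vn n →ₗ[ℝ] ℝ)) :
    Set (Torus n b) :=
  pr n b '' Mcomp n X

/-- A chamber of the toric arrangement: a connected component of `R`. -/
def IsTorChamber (n : ℕ) (b : Module.Basis (Fin n) ℝ (Vn n)) (X : Finset (Vn n →ₗ[ℝ] ℝ))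
    (C : Set (Torus n b)) : Prop :=
  ∃ t ∈ Rcomp n b X, C = connectedComponentIn (Rcomp n b X) t

/-- A layer of the toric arrangement: a connected component of an intersection of a
(possibly empty) subset of the hypersurfaces `H_χ`. -/
def IsTorLayer (n : ℕ) (b : Module.Basis (Fin n) ℝ (Vn n)) (X : Finset (Vn n →ₗ[ℝ] ℝ))
    (L : Set (Torus n b)) : Prop :=
  ∃ X' ⊆ X, ∃ t ∈ ⋂ χ ∈ X', torHyp n b χ,
    L = connectedComponentIn (⋂ χ ∈ X', torHyp n b χ) t

/-- A facet of the toric arrangement: a nonempty intersection of a layer with the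
closure of a chamber. -/
def IsTorFacet (n : ℕ) (b : Module.Basis (Fin n) ℝ (Vn n)) (X : Finset (Vn n →ₗ[ℝ] ℝ))
    (F : Set (Torus n b)) : Prop :=
  F.Nonempty ∧ ∃ L C, IsTorLayer n b X L ∧ IsTorChamber n b X C ∧ F = L ∩ closure C

/-- The toric arrangement is *thick* if `π` is injective on the closure of every
chamber of the affine arrangement. -/
def IsThick (n : ℕ) (b : Module.Basis (Fin n) ℝ (Vn n)) (X : Finset (Vn n →ₗ[ℝ] ℝ)) : Prop :=
  ∀ C : Set (Vn n), IsAffChamber n X C → Set.InjOn (pr n b) (closure C)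


/-
Let `X'` be the functionals occurring in the equations of `L`, and `Y = ⋂_{χ ∈ X'} H_χ`.
The preimage `π⁻¹(Y)` is the set of points where every `χ ∈ X'` is an integer, and there the
vector `(χ v)_{χ ∈ X'}` is a continuous function with values in the discrete set `ℤ^{X'}`, hence
locally constant. Both `L` and `L + Λ = π⁻¹(π L)` are unions of fibres of this vector, so
`L + Λ` is clopen in `π⁻¹(Y)`; as `π` restricts to an open quotient map `π⁻¹(Y) → Y`, the image
`π(L)` is clopen in `Y`. Being the image of a convex set it is connected, hence it is a
connected component of `Y`.
-/

open Set

theorem IsPreconnected.eq_connectedComponentIn_of_isClopen {α : Type*} [TopologicalSpace α]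
    {Y S : Set α} {t : α} (hS : IsPreconnected S) (hSY : S ⊆ Y) (ht : t ∈ S)
    (hclopen : IsClopen ((↑) ⁻¹' S : Set Y)) : S = _root_.connectedComponentIn Y t := by
  refine (hS.subset_connectedComponentIn ht hSY).antisymm ?_
  rw [connectedComponentIn_eq_image (hSY ht), image_subset_iff]
  exact hclopen.connectedComponent_subset ht

theorem QuotientAddGroup.isClopen_preimage_val_of_preimage_mk {G : Type*} [AddGroup G]
    [TopologicalSpace G] [SeparatelyContinuousAdd G] {N : AddSubgroup G} {Y S : Set (G ⧸ N)}
    {Z : Set G} (hZ : mk ⁻¹' Y = Z) (hS : IsClopen ((↑) ⁻¹' (mk ⁻¹' S) : Set Z)) :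
    IsClopen ((↑) ⁻¹' S : Set Y) := by
  subst hZ
  exact (isOpenQuotientMap_mk.restrictPreimage Y).isQuotientMap.isClopen_preimage.1 hS

theorem continuous_round_comp {X : Type*} [TopologicalSpace X] {f : X → ℝ} (hf : Continuous f)
    (hint : ∀ x, ∃ k : ℤ, f x = k) : Continuous fun x => round (f x) := by
  refine Int.isClosedEmbedding_coe_real.isEmbedding.continuous_iff.2 ?_
  convert hf using 1
  funext x
  obtain ⟨k, hk⟩ := hint x
  simp [hk]

def IsFiberSaturated {X ι β : Type*} (s : Finset ι) (f : ι → X → β) (A : Set X) : Prop :=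
  ∀ v ∈ A, ∀ w, (∀ i ∈ s, f i w = f i v) → w ∈ A

theorem IsFiberSaturated.isClopen_preimage_val {X ι : Type*} [TopologicalSpace X]
    {s : Finset ι} {f : ι → X → ℝ} (hf : ∀ i ∈ s, Continuous (f i)) {A : Set X}
    (hA : IsFiberSaturated s f A) :
    IsClopen ((↑) ⁻¹' A : Set {v | ∀ i ∈ s, ∃ k : ℤ, f i v = k}) := by
  set Z := {v | ∀ i ∈ s, ∃ k : ℤ, f i v = k}
  let ψ : Z → s → ℤ := fun z i => round (f i z)
  have hψ : Continuous ψ := continuous_pi fun i =>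
    continuous_round_comp ((hf i i.2).comp continuous_subtype_val) fun z => z.2 i i.2
  have hψ_eq : ∀ z : Z, ∀ i ∈ s, (round (f i z) : ℝ) = f i z := fun z i hi => by
    obtain ⟨k, hk⟩ := z.2 i hi
    rw [hk, round_intCast]
  suffices h : (↑) ⁻¹' A = ψ ⁻¹' (ψ '' ((↑) ⁻¹' A)) from
    h ▸ (isClopen_discrete _).preimage hψ
  refine (subset_preimage_image _ _).antisymm ?_
  rintro w ⟨v, hv, hvw⟩
  refine hA v hv w fun i hi => ?_
  rw [← hψ_eq w i hi, ← hψ_eq v i hi]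
  exact congrArg (fun m : ℤ => (m : ℝ)) (congrFun hvw ⟨i, hi⟩).symm

section Functionals

variable {V : Type*} [AddCommGroup V] [Module ℝ V]

theorem isFiberSaturated_biInter_eq {F : Finset (V →ₗ[ℝ] ℝ)} {P : Set ((V →ₗ[ℝ] ℝ) × ℤ)}
    (hP : ∀ p ∈ P, p.1 ∈ F) :
    IsFiberSaturated F (fun χ => ⇑χ) (⋂ p ∈ P, {v : V | p.1 v = (p.2 : ℝ)}) := by
  intro u hu w hw
  simp only [mem_iInter₂, mem_ofPred_eq] at hu ⊢
  exact fun p hp => (hw p.1 (hP p hp)).trans (hu p hp)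

theorem IsFiberSaturated.preimage_image_mk {F : Finset (V →ₗ[ℝ] ℝ)} {L : Set V}
    (hL : IsFiberSaturated F (fun χ => ⇑χ) L) (Λ : AddSubgroup V) :
    IsFiberSaturated F (fun χ => ⇑χ) ((↑) ⁻¹' ((↑) '' L : Set (V ⧸ Λ))) := by
  intro v hv w hw
  rw [QuotientAddGroup.preimage_image_mk, mem_iUnion] at hv ⊢
  obtain ⟨x, hvx⟩ := hv
  exact ⟨x, hL _ hvx _ fun χ hχ => by simp only [map_add, hw χ hχ]⟩

theorem preimage_image_mk_setOf_intCast {Λ : AddSubgroup V} {χ : V →ₗ[ℝ] ℝ}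
    (hχ : ∀ v ∈ Λ, ∃ k : ℤ, χ v = k) :
    (↑) ⁻¹' ((↑) '' {v | ∃ k : ℤ, χ v = k} : Set (V ⧸ Λ)) = {v | ∃ k : ℤ, χ v = k} := by
  refine (subset_preimage_image _ _).antisymm' ?_
  rw [QuotientAddGroup.preimage_image_mk]
  rintro v ⟨-, ⟨x, rfl⟩, k, hk⟩
  obtain ⟨m, hm⟩ := hχ x x.2
  refine ⟨k - m, ?_⟩
  simp only [map_add] at hk
  push_cast
  linarith

end Functionals

theorem stmt_3_general (n : ℕ) (b : Module.Basis (Fin n) ℝ (Vn n)) (X : Finset (Vn n →ₗ[ℝ] ℝ))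
    (hXint : ∀ χ ∈ X, ∀ v ∈ LamZ n b, ∃ k : ℤ, χ v = (k : ℝ))
    (L : Set (Vn n)) (hL : IsAffSpace n X L) :
    IsTorLayer n b X (pr n b '' L) := by
  classical
  obtain ⟨⟨v₀, hv₀⟩, P, hPX, rfl⟩ := hL
  set X' := X.filter fun χ => ∃ k : ℤ, (χ, k) ∈ P
  have hPX' : ∀ p ∈ P, p.1 ∈ X' := fun p hp => Finset.mem_filter.2 ⟨hPX p hp, p.2, hp⟩
  have hZ :
      pr n b ⁻¹' ⋂ χ ∈ X', torHyp n b χ = {v | ∀ χ ∈ X', ∃ k : ℤ, χ v = k} := by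
    ext v
    simp only [preimage_iInter₂, mem_iInter₂, mem_ofPred_eq]
    refine forall₂_congr fun χ hχ => ?_
    exact Set.ext_iff.1
      (preimage_image_mk_setOf_intCast (hXint χ (Finset.filter_subset _ _ hχ))) v
  have hLY :
      pr n b '' (⋂ p ∈ P, {v | p.1 v = (p.2 : ℝ)}) ⊆ ⋂ χ ∈ X', torHyp n b χ := by
    rw [image_subset_iff, hZ]
    intro v hv χ hχ
    obtain ⟨k, hk⟩ := (Finset.mem_filter.1 hχ).2
    exact ⟨k, mem_iInter₂.1 hv (χ, k) hk⟩
  have hv₀Y := mem_image_of_mem (pr n b) hv₀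
  refine ⟨X', Finset.filter_subset _ _, _, hLY hv₀Y, ?_⟩
  refine IsPreconnected.eq_connectedComponentIn_of_isClopen ?_ hLY hv₀Y ?_
  · refine (convex_iInter₂ fun p _ => ?_).isPreconnected.image _
      QuotientAddGroup.continuous_mk.continuousOn
    exact convex_hyperplane p.1.isLinear _
  · exact QuotientAddGroup.isClopen_preimage_val_of_preimage_mk hZ
      (((isFiberSaturated_biInter_eq hPX').preimage_image_mk _).isClopen_preimage_val
        fun χ _ => χ.continuous_of_finiteDimensional)

/-- the image under `π` of a space of the affine arrangement `A_X`
is a layer of the toric arrangement `T_X`. -/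
theorem stmt_3 (n : ℕ) (b : Module.Basis (Fin n) ℝ (Vn n)) (X : Finset (Vn n →ₗ[ℝ] ℝ))
    (hX0 : ∀ χ ∈ X, χ ≠ 0)
    (hXint : ∀ χ ∈ X, ∀ v ∈ LamZ n b, ∃ k : ℤ, χ v = (k : ℝ))
    (L : Set (Vn n)) (hL : IsAffSpace n X L) :
    IsTorLayer n b X (pr n b '' L) :=
  stmt_3_general n b X hXint L hL

end
end

section
/- Let B = (B_1,…,B_m) be an ordered set partition of {1,…,n+1} into m blocks with 2 ≤ m ≤ n+1, and let B′ be an ordered set partition of {1,…,n+1} into m−1 blocks. Then F(B′) ⊆ F(B) if and only if B′ is cyclically equivalent to an ordered set partition obtained from B by replacing two cyclically consecutive blocks B_i and B_{i+1} (indices taken modulo m, so also the last and the first block) by their union B_i ∪ B_{i+1}. -/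
noncomputable section

/-- The closed subgroup `Γ := ℤ^{n+1} + ℝ·(1,…,1)` of `ℝ^{n+1}`. -/
def gammaAn (n : ℕ) : AddSubgroup (Fin (n + 1) → ℝ) where
  carrier := {x | ∃ (m : Fin (n + 1) → ℤ) (c : ℝ), x = fun i => (m i : ℝ) + c}
  zero_mem' := ⟨0, 0, by funext i; simp⟩
  add_mem' := by
    rintro x y ⟨m, c, rfl⟩ ⟨m', c', rfl⟩
    exact ⟨m + m', c + c', by funext i; show ((m i : ℝ) + c) + ((m' i : ℝ) + c') = (((m + m') i : ℤ) : ℝ) + (c + c'); simp [Pi.add_apply]; ring⟩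
  neg_mem' := by
    rintro x ⟨m, c, rfl⟩
    exact ⟨-m, -c, by funext i; show -((m i : ℝ) + c) = (((-m) i : ℤ) : ℝ) + -c; simp [Pi.neg_apply]; ring⟩

/-- The torus `T = ℝ^{n+1}/Γ`. -/
abbrev TAn (n : ℕ) := (Fin (n + 1) → ℝ) ⧸ gammaAn n

/-- The hypersurface `H_{ij} = π({x : x_i - x_j ∈ ℤ})` of the toric arrangement of
type `Ã_n`. -/
def hypAn (n : ℕ) (i j : Fin (n + 1)) : Set (TAn n) :=
  QuotientAddGroup.mk '' {x : Fin (n + 1) → ℝ | ∃ k : ℤ, x i - x j = (k : ℝ)}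

/-- The complement `R = T ∖ ⋃_{i<j} H_{ij}`. -/
def RAn (n : ℕ) : Set (TAn n) :=
  (⋃ (i : Fin (n + 1)) (j : Fin (n + 1)) (_ : i < j), hypAn n i j)ᶜ

/-- A chamber: a connected component of `R`. -/
def IsChamberAn (n : ℕ) (C : Set (TAn n)) : Prop :=
  ∃ t ∈ RAn n, C = connectedComponentIn (RAn n) t

/-- A layer: a connected component of an intersection of a (possibly empty) subset of
the hypersurfaces `H_{ij}`, `i < j`. -/
def IsLayerAn (n : ℕ) (L : Set (TAn n)) : Prop :=
  ∃ P : Set (Fin (n + 1) × Fin (n + 1)), (∀ p ∈ P, p.1 < p.2) ∧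
    ∃ t ∈ ⋂ p ∈ P, hypAn n p.1 p.2,
      L = connectedComponentIn (⋂ p ∈ P, hypAn n p.1 p.2) t

/-- A facet: a nonempty intersection of a layer with the closure of a chamber. -/
def IsFacetAn (n : ℕ) (F : Set (TAn n)) : Prop :=
  F.Nonempty ∧ ∃ L C, IsLayerAn n L ∧ IsChamberAn n C ∧ F = L ∩ closure C

/-- `CovDimLE X m`: every open cover of `X` admits an open refinement in which every
point lies in at most `m + 1` sets (Lebesgue covering dimension `≤ m`). -/
def CovDimLE (X : Type*) [TopologicalSpace X] (m : ℕ) : Prop :=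
  ∀ U : Set (Set X), (∀ u ∈ U, IsOpen u) → ⋃₀ U = Set.univ →
    ∃ W : Set (Set X), (∀ w ∈ W, IsOpen w) ∧ (∀ w ∈ W, ∃ u ∈ U, w ⊆ u) ∧
      ⋃₀ W = Set.univ ∧
      ∀ x : X, {w ∈ W | x ∈ w}.Finite ∧ {w ∈ W | x ∈ w}.ncard ≤ m + 1

/-- The topological (Lebesgue covering) dimension of `X` equals `k`. -/
def HasTopDim (X : Type*) [TopologicalSpace X] (k : ℕ) : Prop :=
  CovDimLE X k ∧ ∀ m : ℕ, CovDimLE X m → k ≤ m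

/-- An ordered set partition of `{1,…,n+1}` into `k+1` (nonempty, pairwise disjoint,
covering) blocks. -/
def IsOrdPartition (n k : ℕ) (B : Fin (k + 1) → Set (Fin (n + 1))) : Prop :=
  (∀ m, (B m).Nonempty) ∧ (∀ m m', m ≠ m' → Disjoint (B m) (B m')) ∧
    (⋃ m, B m) = Set.univ

/-- Two ordered set partitions are cyclically equivalent if one is a cyclic rotation
of the other. -/
def CyclicEquiv (n k : ℕ) (B B' : Fin (k + 1) → Set (Fin (n + 1))) : Prop :=
  ∃ s : Fin (k + 1), ∀ m : Fin (k + 1), B' m = B (m + s)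

/-- The set `F(B)` associated to an ordered set partition `B = (B_1,…,B_{k+1})`:
the image under `π` of the closure of the set of points `x` with `x_i = c_m` for
`i ∈ B_m`, for some `c_1 < ⋯ < c_{k+1} < c_1 + 1`. -/
def FB (n k : ℕ) (B : Fin (k + 1) → Set (Fin (n + 1))) : Set (TAn n) :=
  QuotientAddGroup.mk '' closure {x : Fin (n + 1) → ℝ |
    ∃ c : Fin (k + 1) → ℝ, StrictMono c ∧ c (Fin.last k) < c 0 + 1 ∧
      ∀ m : Fin (k + 1), ∀ i ∈ B m, x i = c m}

/-- The ordered set partition obtained from `B = (B_1,…,B_{k+2})` by replacing the two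
first blocks `B_1`, `B_2` by their union. -/
def mergeHead (n k : ℕ) (B : Fin (k + 2) → Set (Fin (n + 1))) :
    Fin (k + 1) → Set (Fin (n + 1)) :=
  fun j => if j = 0 then B 0 ∪ B 1 else B j.succ

/-!
`F(B)` is the image under `π` of the closed stratum of `B`: the points constant on the blocks,
with block values `c₀ ≤ ⋯ ≤ c_k ≤ c₀ + 1`. Rotating `B` changes representatives by a vector
of `Γ`, and merging two consecutive blocks is the specialisation `c_i = c_{i+1}`; this gives
`F(B') ⊆ F(B)` for the merged partitions. Conversely, the point of `F(B')` taking the value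
`j / (k + 1)` on `B'_j` lifts to the closed stratum of `B`. Up to a common translation and the
factor `k + 1`, the block values of the lift are integers `τ₀ ≤ ⋯ ≤ τ_{k+1} ≤ τ₀ + k + 1` meeting
every residue class modulo `k + 1`, with `τ_m ≡ j` when `B_m ⊆ B'_j`. Such a sequence rises by exactly one at every step, cyclically,
except at a single step, and that step names the two blocks of `B` merged in `B'`.
-/

open Set

section

variable {n : ℕ}

namespace IsOrdPartition

variable {K : ℕ} {B : Fin (K + 1) → Set (Fin (n + 1))}

theorem exists_mem (hB : IsOrdPartition n K B) (i : Fin (n + 1)) : ∃ m, i ∈ B m :=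
  mem_iUnion.mp (hB.2.2 ▸ mem_univ i)

theorem eq_of_mem (hB : IsOrdPartition n K B) {m m' : Fin (K + 1)} {i : Fin (n + 1)}
    (h : i ∈ B m) (h' : i ∈ B m') : m = m' := by
  by_contra hne
  exact disjoint_left.mp (hB.2.1 m m' hne) h h'

def block (hB : IsOrdPartition n K B) (i : Fin (n + 1)) : Fin (K + 1) :=
  (hB.exists_mem i).choose

theorem mem_block (hB : IsOrdPartition n K B) (i : Fin (n + 1)) : i ∈ B (hB.block i) :=
  (hB.exists_mem i).choose_spec

theorem block_eq (hB : IsOrdPartition n K B) {m : Fin (K + 1)} {i : Fin (n + 1)}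
    (h : i ∈ B m) : hB.block i = m :=
  hB.eq_of_mem (hB.mem_block i) h

theorem surjective_of_forall_subset {L : ℕ} {A : Fin (L + 1) → Set (Fin (n + 1))}
    (hA : IsOrdPartition n L A) (hB : IsOrdPartition n K B) {σ : Fin (L + 1) → Fin (K + 1)}
    (h : ∀ m, A m ⊆ B (σ m)) : Function.Surjective σ := by
  intro j
  obtain ⟨i, hi⟩ := hB.1 j
  obtain ⟨m, hm⟩ := hA.exists_mem i
  exact ⟨m, hB.eq_of_mem (h m hm) hi⟩

end IsOrdPartition

theorem eq_of_subset_of_iUnion_eq_univ {ι α : Type*} {P Q : ι → Set α} (hP : ⋃ j, P j = univ)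
    (hQ : ∀ j j', j ≠ j' → Disjoint (Q j) (Q j')) (h : ∀ j, P j ⊆ Q j) : P = Q := by
  refine funext fun j => (h j).antisymm fun i hi => ?_
  obtain ⟨j', hj'⟩ := mem_iUnion.mp (hP ▸ mem_univ i)
  obtain rfl : j' = j := by
    by_contra hne
    exact disjoint_left.mp (hQ j' j hne) (h j' hj') hi
  exact hj'

section Strata

variable {K : ℕ} {B : Fin (K + 1) → Set (Fin (n + 1))}

def openStratum (n K : ℕ) (B : Fin (K + 1) → Set (Fin (n + 1))) : Set (Fin (n + 1) → ℝ) :=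
  {x | ∃ c : Fin (K + 1) → ℝ, StrictMono c ∧ c (Fin.last K) < c 0 + 1 ∧
    ∀ m : Fin (K + 1), ∀ i ∈ B m, x i = c m}

def closedStratum (n K : ℕ) (B : Fin (K + 1) → Set (Fin (n + 1))) : Set (Fin (n + 1) → ℝ) :=
  {x | ∃ c : Fin (K + 1) → ℝ, Monotone c ∧ c (Fin.last K) ≤ c 0 + 1 ∧
    ∀ m : Fin (K + 1), ∀ i ∈ B m, x i = c m}

theorem FB_eq_image_closure_openStratum :
    FB n K B = QuotientAddGroup.mk '' closure (openStratum n K B) :=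
  rfl

theorem openStratum_subset_closedStratum : openStratum n K B ⊆ closedStratum n K B :=
  fun _ ⟨c, hc, hwrap, hx⟩ => ⟨c, hc.monotone, hwrap.le, hx⟩

theorem isClosed_closedStratum (hne : ∀ m, (B m).Nonempty) :
    IsClosed (closedStratum n K B) := by
  choose r hr using hne
  have hT : closedStratum n K B =
      {x | ∀ m, ∀ i ∈ B m, x i = x (r m)} ∩ (fun x m => x (r m)) ⁻¹' {c | Monotone c} ∩
        {x | x (r (Fin.last K)) ≤ x (r 0) + 1} := by
    ext x
    constructor
    · rintro ⟨c, hc, hwrap, hx⟩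
      have hxr : ∀ m, x (r m) = c m := fun m => hx m _ (hr m)
      refine ⟨⟨fun m i hi => by rw [hx m i hi, hxr], ?_⟩, ?_⟩
      · simpa only [mem_preimage, mem_ofPred_eq, hxr] using hc
      · simpa only [mem_ofPred_eq, hxr] using hwrap
    · rintro ⟨⟨hx, hmono⟩, hwrap⟩
      exact ⟨fun m => x (r m), hmono, hwrap, hx⟩
  rw [hT]
  refine (IsClosed.inter ?_ (isClosed_monotone.preimage (by fun_prop))).inter
    (isClosed_le (by fun_prop) (by fun_prop))
  simp only [ofPred_forall]
  exact isClosed_iInter fun m => isClosed_iInter fun i => isClosed_iInter fun _ =>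
    isClosed_eq (continuous_apply i) (continuous_apply (r m))

theorem openSegment_subset_openStratum {x z : Fin (n + 1) → ℝ} (hx : x ∈ closedStratum n K B)
    (hz : z ∈ openStratum n K B) : openSegment ℝ x z ⊆ openStratum n K B := by
  obtain ⟨c, hc, hcw, hxc⟩ := hx
  obtain ⟨e, he, hew, hze⟩ := hz
  rintro _ ⟨a, b, ha, hb, hab, rfl⟩
  refine ⟨a • c + b • e, fun m m' hlt => ?_, ?_, fun m i hi => ?_⟩
  · have := hc hlt.le
    have := he hlt
    simp only [Pi.add_apply, Pi.smul_apply, smul_eq_mul]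
    nlinarith
  · simp only [Pi.add_apply, Pi.smul_apply, smul_eq_mul]
    nlinarith
  · simp [hxc m i hi, hze m i hi]

theorem closedStratum_subset_closure_openStratum (hS : (openStratum n K B).Nonempty) :
    closedStratum n K B ⊆ closure (openStratum n K B) := by
  obtain ⟨z, hz⟩ := hS
  intro x hx
  exact closure_mono (openSegment_subset_openStratum hx hz)
    (segment_subset_closure_openSegment (left_mem_segment ℝ x z))

def IsOrdPartition.standardPoint (hB : IsOrdPartition n K B) : Fin (n + 1) → ℝ :=
  fun i => (hB.block i : ℝ) / (K + 1)

theorem IsOrdPartition.standardPoint_mem_openStratum (hB : IsOrdPartition n K B) :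
    hB.standardPoint ∈ openStratum n K B := by
  have hK : (0 : ℝ) < K + 1 := by positivity
  refine ⟨fun m => (m : ℝ) / (K + 1), fun m m' h => ?_, ?_, fun m i hi => ?_⟩
  · exact div_lt_div_of_pos_right (by exact_mod_cast h) hK
  · rw [div_lt_iff₀ hK]
    simp
  · simp [IsOrdPartition.standardPoint, hB.block_eq hi]

theorem closure_openStratum (hB : IsOrdPartition n K B) :
    closure (openStratum n K B) = closedStratum n K B :=
  (closure_minimal openStratum_subset_closedStratum (isClosed_closedStratum hB.1)).antisymm
    (closedStratum_subset_closure_openStratum ⟨_, hB.standardPoint_mem_openStratum⟩)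

theorem FB_eq_image_closedStratum (hB : IsOrdPartition n K B) :
    FB n K B = QuotientAddGroup.mk '' closedStratum n K B := by
  rw [FB_eq_image_closure_openStratum, closure_openStratum hB]

end Strata

section Rotation

variable {K : ℕ}

theorem indicator_one_mem_gammaAn (s : Set (Fin (n + 1))) :
    s.indicator (1 : Fin (n + 1) → ℝ) ∈ gammaAn n := by
  classical
  refine ⟨s.indicator 1, 0, funext fun i => ?_⟩
  by_cases hi : i ∈ s <;> simp [hi]

theorem add_indicator_mem_openStratum_rotate {B : Fin (K + 1) → Set (Fin (n + 1))}
    {x : Fin (n + 1) → ℝ} (hx : x ∈ openStratum n K B) :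
    x + (B 0).indicator 1 ∈ openStratum n K (fun m => B (m + 1)) := by
  obtain ⟨c, hc, hwrap, hxc⟩ := hx
  have hstep : ∀ m, m ≠ Fin.last K → c m < c (m + 1) :=
    fun m hm => hc (Fin.lt_add_one_iff.mpr (Fin.lt_last_iff_ne_last.mpr hm))
  refine ⟨fun m => if m = Fin.last K then c 0 + 1 else c (m + 1),
    Fin.strictMono_iff_lt_succ.mpr fun m => ?_, ?_, fun m i hi => ?_⟩
  · rw [if_neg (Fin.castSucc_lt_last m).ne, Fin.coeSucc_eq_succ]
    split_ifs with hm
    · exact hm ▸ hwrap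
    · exact hstep _ hm
  · dsimp only
    rw [if_pos rfl]
    split_ifs with h0
    · linarith
    · linarith [hstep 0 h0]
  · simp only [Pi.add_apply, hxc _ i hi] at hi ⊢
    by_cases hm : m = Fin.last K
    · subst hm
      rw [Fin.last_add_one] at hi ⊢
      simp [hi]
    · have hi0 : i ∉ B 0 := fun hi0 => hm <| add_right_cancel <|
        (hc.injective ((hxc _ i hi).symm.trans (hxc _ i hi0))).trans (Fin.last_add_one K).symm
      simp [hm, hi0]

theorem FB_subset_FB_rotate_one (B : Fin (K + 1) → Set (Fin (n + 1))) :
    FB n K B ⊆ FB n K (fun m => B (m + 1)) := by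
  rintro _ ⟨x, hx, rfl⟩
  have hv := indicator_one_mem_gammaAn (B 0)
  exact ⟨x + (B 0).indicator 1,
    map_mem_closure (f := (· + (B 0).indicator 1)) (continuous_add_const _) hx
      fun _ => add_indicator_mem_openStratum_rotate,
    QuotientAddGroup.mk_add_of_mem x hv⟩

theorem FB_subset_FB_rotate (B : Fin (K + 1) → Set (Fin (n + 1))) (s : Fin (K + 1)) :
    FB n K B ⊆ FB n K (fun m => B (m + s)) := by
  induction s using Fin.induction with
  | zero => simp
  | succ s ih =>
    have hs : (fun m => B (m + s.succ)) = fun m => B (m + 1 + s.castSucc) := by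
      simp only [← Fin.coeSucc_eq_succ, add_right_comm _ (1 : Fin (K + 1)), add_assoc]
    rw [hs]
    exact ih.trans (FB_subset_FB_rotate_one _)

theorem FB_rotate (B : Fin (K + 1) → Set (Fin (n + 1))) (s : Fin (K + 1)) :
    FB n K (fun m => B (m + s)) = FB n K B := by
  refine subset_antisymm ?_ (FB_subset_FB_rotate B s)
  simpa only [neg_add_cancel_right] using FB_subset_FB_rotate (fun m => B (m + s)) (-s)

theorem IsOrdPartition.rotate {B : Fin (K + 1) → Set (Fin (n + 1))}
    (hB : IsOrdPartition n K B) (s : Fin (K + 1)) : IsOrdPartition n K (fun m => B (m + s)) :=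
  ⟨fun _ => hB.1 _, fun _ _ h => hB.2.1 _ _ (fun h' => h (add_right_cancel h')),
    ((Equiv.addRight s).surjective.iUnion_comp B).trans hB.2.2⟩

end Rotation

section Merge

variable {k : ℕ} {C : Fin (k + 2) → Set (Fin (n + 1))}

theorem subset_mergeHead_predAbove (m : Fin (k + 2)) :
    C m ⊆ mergeHead n k C (Fin.predAbove 0 m) := by
  induction m using Fin.cases with
  | zero => simp [mergeHead]
  | succ j =>
    rw [Fin.predAbove_zero_succ, mergeHead]
    split_ifs with hj
    · subst hj
      exact subset_union_right
    · exact subset_rfl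

theorem mergeHead_subset {X : Fin (k + 1) → Set (Fin (n + 1))}
    (h : ∀ m, C m ⊆ X (Fin.predAbove 0 m)) (j : Fin (k + 1)) : mergeHead n k C j ⊆ X j := by
  rw [mergeHead]
  split_ifs with hj
  · subst hj
    exact union_subset (by simpa using h 0) (by simpa using h 1)
  · simpa using h j.succ

theorem iUnion_mergeHead : ⋃ j, mergeHead n k C j = ⋃ m, C m :=
  (iUnion_subset (mergeHead_subset (X := fun _ => ⋃ m, C m) (subset_iUnion C))).antisymm
    (iUnion_subset fun m => (subset_mergeHead_predAbove m).trans (subset_iUnion _ _))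

theorem closedStratum_mergeHead_subset :
    closedStratum n k (mergeHead n k C) ⊆ closedStratum n (k + 1) C := by
  rintro x ⟨c, hc, hwrap, hx⟩
  refine ⟨c ∘ Fin.predAbove 0, hc.comp (Fin.predAbove_right_monotone 0), by simpa using hwrap,
    fun m i hi => hx _ i (subset_mergeHead_predAbove m hi)⟩

theorem FB_mergeHead_subset (hC : IsOrdPartition n (k + 1) C) :
    FB n k (mergeHead n k C) ⊆ FB n (k + 1) C := by
  rw [FB_eq_image_closure_openStratum, FB_eq_image_closure_openStratum]
  refine image_mono (closure_minimal ?_ isClosed_closure)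
  rw [closure_openStratum hC]
  exact openStratum_subset_closedStratum.trans closedStratum_mergeHead_subset

end Merge

theorem FB_subset_of_cyclicEquiv_mergeHead {k : ℕ} {B : Fin (k + 2) → Set (Fin (n + 1))}
    {B' : Fin (k + 1) → Set (Fin (n + 1))} (hB : IsOrdPartition n (k + 1) B) (s : Fin (k + 2))
    (h : CyclicEquiv n k B' (mergeHead n k (fun i => B (i + s)))) :
    FB n k B' ⊆ FB n (k + 1) B := by
  obtain ⟨r, hr⟩ := h
  have hB' : B' = fun j => mergeHead n k (fun i => B (i + s)) (j + -r) := by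
    simp [hr]
  rw [hB', FB_rotate, ← FB_rotate B s]
  exact FB_mergeHead_subset (hB.rotate s)

section CyclicSequence

variable {k : ℕ} {τ : Fin (k + 2) → ℤ}

theorem exists_eq_of_forall_exists_modEq (hτ : Monotone τ)
    (hwrap : τ (Fin.last (k + 1)) ≤ τ 0 + (k + 1))
    (hsurj : ∀ v : ℤ, ∃ m, τ m ≡ v [ZMOD (k + 1)]) {v : ℤ} (hv₀ : τ 0 < v)
    (hv₁ : v < τ 0 + (k + 1)) : ∃ m, τ m = v := by
  obtain ⟨m, hm⟩ := hsurj v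
  have h₀ := hτ (Fin.zero_le m)
  have h₁ := hτ (Fin.le_last m)
  have := Int.eq_zero_of_abs_lt_dvd hm.dvd (abs_sub_lt_iff.mpr ⟨by omega, by omega⟩)
  exact ⟨m, by omega⟩

theorem succ_le_castSucc_add_one_of_forall_exists_modEq (hτ : Monotone τ)
    (hwrap : τ (Fin.last (k + 1)) ≤ τ 0 + (k + 1))
    (hsurj : ∀ v : ℤ, ∃ m, τ m ≡ v [ZMOD (k + 1)]) (m : Fin (k + 1)) :
    τ m.succ ≤ τ m.castSucc + 1 := by
  by_contra! h
  have h₀ := hτ (Fin.zero_le m.castSucc)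
  have h₁ := hτ (Fin.le_last m.succ)
  obtain ⟨m', hm'⟩ :=
    exists_eq_of_forall_exists_modEq hτ hwrap hsurj (v := τ m.castSucc + 1) (by omega) (by omega)
  rcases le_or_gt m' m.castSucc with h' | h'
  · linarith [hτ h']
  · linarith [hτ (Fin.castSucc_lt_iff_succ_le.mp h')]

/-- The defect `τ 0 + m - τ m` is monotone with values in `{0, 1}`, so it jumps at most once;
the block `s` just before the jump is merged with its cyclic successor. -/
theorem exists_modEq_succ_add (hτ : Monotone τ) (hwrap : τ (Fin.last (k + 1)) ≤ τ 0 + (k + 1))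
    (hsurj : ∀ v : ℤ, ∃ m, τ m ≡ v [ZMOD (k + 1)]) :
    ∃ s : Fin (k + 2), ∀ j : Fin (k + 1), τ (j.succ + s) ≡ τ s + j.val [ZMOD (k + 1)] := by
  set e : Fin (k + 2) → ℤ := fun m => τ 0 + m.val - τ m with he
  have he_mono : Monotone e := Fin.monotone_iff_le_succ.mpr fun m => by
    have := succ_le_castSucc_add_one_of_forall_exists_modEq hτ hwrap hsurj m
    simp only [he, Fin.val_succ, Fin.val_castSucc]
    omega
  have he_last : e (Fin.last (k + 1)) ≤ 1 := by
    obtain ⟨m, hm⟩ : ∃ m, τ m = τ 0 + k := by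
      rcases Nat.eq_zero_or_pos k with rfl | hk
      · exact ⟨0, by simp⟩
      · exact exists_eq_of_forall_exists_modEq hτ hwrap hsurj (by omega) (by omega)
    have := hτ (Fin.le_last m)
    simp only [he, Fin.val_last]
    omega
  obtain ⟨s, hs, hs_max⟩ : ∃ s, e s = 0 ∧ ∀ m, e m = 0 → m ≤ s := by
    classical
    let Z := Finset.univ.filter fun m => e m = 0
    have hZ : Z.Nonempty := ⟨0, by simp [Z, he]⟩
    exact ⟨Z.max' hZ, (Finset.mem_filter.mp (Z.max'_mem hZ)).2,
      fun m hm => Z.le_max' m (by simp [Z, hm])⟩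
  have he_val : ∀ m : Fin (k + 2), e m = if m.val ≤ s.val then 0 else 1 := by
    intro m
    have h₀ : e 0 = 0 := by simp [he]
    have := he_mono (Fin.zero_le m)
    have := he_mono (Fin.le_last m)
    split_ifs with hms
    · linarith [he_mono (Fin.le_def.mpr hms)]
    · have := mt (hs_max m) (Fin.not_le.mpr (Fin.lt_def.mpr (by omega)))
      omega
  refine ⟨s, fun j => Int.modEq_iff_dvd.mpr ?_⟩
  have hval := Fin.val_add_eq_ite j.succ s
  rw [Fin.val_succ] at hval
  have hj := j.isLt
  have hs_lt := s.isLt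
  have hjs := he_val (j.succ + s)
  simp only [he] at hjs hs
  -- otherwise `omega` unfolds this value into a `%` by the non-literal `k + 2`
  generalize (j.succ + s).val = v at hval hjs
  split_ifs at hval hjs with hw hle hle
  · exact ⟨1, by omega⟩
  · omega
  · omega
  · exact ⟨0, by omega⟩

end CyclicSequence

section Lift

open Fin.CommRing

theorem exists_int_lift_of_FB_subset {L K : ℕ} {B : Fin (L + 1) → Set (Fin (n + 1))}
    {B' : Fin (K + 1) → Set (Fin (n + 1))} (hB : IsOrdPartition n L B)
    (hB' : IsOrdPartition n K B') (h : FB n K B' ⊆ FB n L B) :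
    ∃ τ : Fin (L + 1) → ℤ, Monotone τ ∧ τ (Fin.last L) ≤ τ 0 + (K + 1) ∧
      ∀ m, B m ⊆ B' (τ m : Fin (K + 1)) := by
  have hK : (0 : ℝ) < K + 1 := by positivity
  obtain ⟨y, ⟨d, hd, hdwrap, hyd⟩, hy⟩ : QuotientAddGroup.mk hB'.standardPoint ∈
      QuotientAddGroup.mk '' closedStratum n L B :=
    FB_eq_image_closedStratum hB ▸ h ⟨_, subset_closure hB'.standardPoint_mem_openStratum, rfl⟩
  obtain ⟨a, t, hat⟩ := QuotientAddGroup.eq.mp hy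
  set ν : Fin (n + 1) → ℤ := fun i => (hB'.block i : ℤ) - (K + 1 : ℕ) * a i with hν
  have hyν : ∀ i, y i = ν i / (K + 1) - t := by
    intro i
    have := congrFun hat i
    simp only [Pi.add_apply, Pi.neg_apply, IsOrdPartition.standardPoint] at this
    simp only [hν]
    push_cast
    rw [sub_div, mul_div_cancel_left₀ _ hK.ne']
    linarith
  choose r hr using hB.1
  have hdν : ∀ m, d m = ν (r m) / (K + 1) - t := fun m => (hyd m _ (hr m)).symm.trans (hyν _)
  refine ⟨fun m => ν (r m), fun m m' hmm' => ?_, ?_, fun m i hi => ?_⟩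
  · have := hd hmm'
    rw [hdν, hdν, sub_le_sub_iff_right, div_le_div_iff_of_pos_right hK] at this
    exact_mod_cast this
  · rw [hdν, hdν, sub_add_eq_add_sub, sub_le_sub_iff_right, div_add_one hK.ne',
      div_le_div_iff_of_pos_right hK] at hdwrap
    exact_mod_cast hdwrap
  · have hνi : ν (r m) = ν i := by
      have := (hdν m).symm.trans ((hyd m i hi).symm.trans (hyν i))
      rw [sub_left_inj, div_left_inj' hK.ne'] at this
      exact_mod_cast this
    have : (ν i : Fin (K + 1)) = hB'.block i := by
      simp [hν]
    simp only [hνi, this]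
    exact hB'.mem_block i

theorem cyclicEquiv_mergeHead_of_FB_subset {k : ℕ} {B : Fin (k + 2) → Set (Fin (n + 1))}
    {B' : Fin (k + 1) → Set (Fin (n + 1))} (hB : IsOrdPartition n (k + 1) B)
    (hB' : IsOrdPartition n k B') (h : FB n k B' ⊆ FB n (k + 1) B) :
    ∃ s : Fin (k + 2), CyclicEquiv n k B' (mergeHead n k (fun i => B (i + s))) := by
  obtain ⟨τ, hτ, hwrap, hsub⟩ := exists_int_lift_of_FB_subset hB hB' h
  have hsurj : ∀ v : ℤ, ∃ m, τ m ≡ v [ZMOD (k + 1)] := fun v => by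
    obtain ⟨m, hm⟩ := hB.surjective_of_forall_subset hB' hsub (v : Fin (k + 1))
    exact ⟨m, by exact_mod_cast (CharP.intCast_eq_intCast (Fin (k + 1)) (k + 1)).mp hm⟩
  obtain ⟨s, hs⟩ := exists_modEq_succ_add hτ (by exact_mod_cast hwrap) hsurj
  have hshift : ∀ m, B (m + s) ⊆ B' (Fin.predAbove 0 m + τ s) := by
    intro m
    induction m using Fin.cases with
    | zero => simpa using hsub s
    | succ j =>
      have hj : (τ (j.succ + s) : Fin (k + 1)) = j + τ s := by
        rw [(CharP.intCast_eq_intCast (Fin (k + 1)) (k + 1)).mpr (by exact_mod_cast hs j),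
          Int.cast_add, Int.cast_natCast, Fin.cast_val_eq_self]
        exact add_comm _ _
      simpa only [Fin.predAbove_zero_succ, hj] using hsub (j.succ + s)
  refine ⟨s, τ s, congrFun (eq_of_subset_of_iUnion_eq_univ ?_ (hB'.rotate _).2.1 (mergeHead_subset hshift))⟩
  rw [iUnion_mergeHead]
  exact (hB.rotate s).2.2

end Lift

end

theorem stmt_14_general (n k : ℕ)
    (B : Fin (k + 2) → Set (Fin (n + 1))) (hB : IsOrdPartition n (k + 1) B)
    (B' : Fin (k + 1) → Set (Fin (n + 1))) (hB' : IsOrdPartition n k B') :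
    FB n k B' ⊆ FB n (k + 1) B ↔
      ∃ s : Fin (k + 2), CyclicEquiv n k B' (mergeHead n k (fun i => B (i + s))) :=
  ⟨cyclicEquiv_mergeHead_of_FB_subset hB hB',
    fun ⟨s, hs⟩ => FB_subset_of_cyclicEquiv_mergeHead hB s hs⟩

/-- for an ordered set partition `B` into `m = k+2` blocks
(`2 ≤ m ≤ n+1`) and an ordered set partition `B'` into `m-1 = k+1` blocks, one has
`F(B') ⊆ F(B)` iff `B'` is cyclically equivalent to an ordered set partition obtained
from `B` by replacing two cyclically consecutive blocks by their union (merging after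
a cyclic rotation of `B`). -/
theorem stmt_14 (n k : ℕ) (hn : 1 ≤ n) (hm : k + 2 ≤ n + 1)
    (B : Fin (k + 2) → Set (Fin (n + 1))) (hB : IsOrdPartition n (k + 1) B)
    (B' : Fin (k + 1) → Set (Fin (n + 1))) (hB' : IsOrdPartition n k B') :
    FB n k B' ⊆ FB n (k + 1) B ↔
      ∃ s : Fin (k + 2), CyclicEquiv n k B' (mergeHead n k (fun i => B (i + s))) :=
  stmt_14_general n k B hB B' hB'

end
end
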